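/- arXiv:1805.00075 — 4 statements merged into one kernel-verified Lean document; each statement's English description precedes it below -/
import Mathlib

section
/- Let r = ∑_{0≤j≤q} 2^{h_j} be a positive integer with h_0 > h_1 > ⋯ > h_q ≥ 0, and set r_j := ∑_{i<j} 2^{h_i}. Then for every real x > 0 one has ∑_{0 ≤ ℓ < r} ε_ℓ/(x+ℓ) = ∑_{0 ≤ j ≤ q} (−1)^j · g_{h_j}(x + r_j). -/
/-- Thue–Morse signs: `tmSign n = ε_n = (-1)^{t_n}`, where `t_n` is the parity of
the number of ones in the binary representation of `n`. -/
noncomputable def tmSign (n : ℕ) : ℝ := (-1 : ℝ) ^ (Nat.digits 2 n).sum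

/-- `gFun k x = g_k(x) = ∑_{0 ≤ ℓ < 2^k} ε_ℓ / (x + ℓ)`. -/
noncomputable def gFun (k : ℕ) (x : ℝ) : ℝ :=
  ∑ ℓ ∈ Finset.range (2 ^ k), tmSign ℓ / (x + ℓ)

/-! The digits of `ℓ + 2^k m` with `ℓ < 2^k` are those of `ℓ`, padded by zeros, followed by those
of `m`; hence `ε` is multiplicative on such splittings. Peeling off the smallest power `2^{h_q}`
of `r`, every `ℓ = r_q + i` with `i < 2^{h_q}` has `ε_ℓ = (-1)^q ε_i`, so the last block of the
sum is `(-1)^q g_{h_q}(x + r_q)`, and induction on `q` finishes the proof. -/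

open Finset

theorem Nat.digits_sum_add_base_pow_mul {b k ℓ : ℕ} (hb : 1 < b) (hℓ : ℓ < b ^ k) (m : ℕ) :
    (Nat.digits b (ℓ + b ^ k * m)).sum = (Nat.digits b ℓ).sum + (Nat.digits b m).sum := by
  rcases Nat.eq_zero_or_pos m with rfl | hm
  · simp
  have hlen : (Nat.digits b ℓ).length ≤ k := (Nat.digits_length_le_iff hb ℓ).2 hℓ
  rw [← Nat.add_sub_cancel' hlen, ← Nat.digits_append_zeroes_append_digits hb hm]
  simp

theorem tmSign_add_two_pow_mul {k ℓ : ℕ} (hℓ : ℓ < 2 ^ k) (m : ℕ) :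
    tmSign (ℓ + 2 ^ k * m) = tmSign ℓ * tmSign m := by
  rw [tmSign, Nat.digits_sum_add_base_pow_mul one_lt_two hℓ, pow_add, tmSign, tmSign]

theorem tmSign_add_two_pow {k ℓ : ℕ} (hℓ : ℓ < 2 ^ k) : tmSign (ℓ + 2 ^ k) = -tmSign ℓ := by
  simpa [tmSign] using tmSign_add_two_pow_mul hℓ 1

theorem tmSign_add_sum_two_pow {n : ℕ} {h : ℕ → ℕ} (hh : StrictAntiOn h (Set.Iio n))
    {i : ℕ} (hi : ∀ j < n, i < 2 ^ h j) :
    tmSign (i + ∑ j ∈ range n, 2 ^ h j) = (-1) ^ n * tmSign i := by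
  induction n generalizing i with
  | zero => simp
  | succ n ih =>
    have hi' : ∀ j < n, i + 2 ^ h n < 2 ^ h j := fun j hj =>
      calc i + 2 ^ h n < 2 ^ (h n + 1) := by have := hi n n.lt_succ_self; rw [pow_succ]; omega
        _ ≤ 2 ^ h j := Nat.pow_le_pow_right two_pos
          (hh (Set.mem_Iio.2 (by omega)) (Set.mem_Iio.2 n.lt_succ_self) hj)
    rw [sum_range_succ, ← add_assoc, add_right_comm,
      ih (hh.mono (Set.Iio_subset_Iio n.le_succ)) hi', tmSign_add_two_pow (hi n n.lt_succ_self),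
      pow_succ]
    ring

theorem sum_range_tmSign_div_eq_sum_gFun {n : ℕ} {h : ℕ → ℕ} (hh : StrictAntiOn h (Set.Iio n))
    (x : ℝ) :
    ∑ ℓ ∈ range (∑ j ∈ range n, 2 ^ h j), tmSign ℓ / (x + ℓ)
      = ∑ j ∈ range n, (-1 : ℝ) ^ j * gFun (h j) (x + ((∑ i ∈ range j, 2 ^ h i : ℕ) : ℝ)) := by
  induction n with
  | zero => simp
  | succ n ih =>
    set r := ∑ j ∈ range n, 2 ^ h j
    have hblock : ∀ i ∈ range (2 ^ h n),
        tmSign (r + i) / (x + (r + i : ℕ)) = (-1) ^ n * (tmSign i / (x + r + i)) := by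
      intro i hi
      have hi' : ∀ j < n, i < 2 ^ h j := fun j hj =>
        (mem_range.1 hi).trans <| Nat.pow_lt_pow_right one_lt_two <|
          hh (Set.mem_Iio.2 (by omega)) (Set.mem_Iio.2 n.lt_succ_self) hj
      rw [add_comm r i, tmSign_add_sum_two_pow (hh.mono (Set.Iio_subset_Iio n.le_succ)) hi']
      push_cast
      ring
    rw [sum_range_succ, sum_range_add, ih (hh.mono (Set.Iio_subset_Iio n.le_succ)),
      sum_range_succ, sum_congr rfl hblock, ← mul_sum, gFun]

theorem stmt_3_general (q : ℕ) (h : ℕ → ℕ)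
    (hdec : ∀ i j, i < j → j ≤ q → h j < h i)
    (x : ℝ) :
    ∑ ℓ ∈ Finset.range (∑ j ∈ Finset.range (q + 1), 2 ^ h j),
        tmSign ℓ / (x + ℓ)
      = ∑ j ∈ Finset.range (q + 1),
          (-1 : ℝ) ^ j * gFun (h j) (x + ((∑ i ∈ Finset.range j, 2 ^ h i : ℕ) : ℝ)) :=
  sum_range_tmSign_div_eq_sum_gFun
    (fun i _ j hj hij => hdec i j hij (Nat.lt_succ_iff.1 hj)) x

/-- if `r = ∑_{0 ≤ j ≤ q} 2^{h_j}` with `h_0 > h_1 > ⋯ > h_q ≥ 0`, and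
`r_j = ∑_{i < j} 2^{h_i}`, then for all `x > 0`,
`∑_{0 ≤ ℓ < r} ε_ℓ/(x+ℓ) = ∑_{0 ≤ j ≤ q} (-1)^j g_{h_j}(x + r_j)`. -/
theorem stmt_3 (q : ℕ) (h : ℕ → ℕ)
    (hdec : ∀ i j, i < j → j ≤ q → h j < h i)
    (x : ℝ) (hx : 0 < x) :
    ∑ ℓ ∈ Finset.range (∑ j ∈ Finset.range (q + 1), 2 ^ h j),
        tmSign ℓ / (x + ℓ)
      = ∑ j ∈ Finset.range (q + 1),
          (-1 : ℝ) ^ j * gFun (h j) (x + ((∑ i ∈ Finset.range j, 2 ^ h i : ℕ) : ℝ)) :=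
  stmt_3_general q h hdec x
end

section
/- For all integers k ≥ 1 and h with 0 ≤ h < k, and every real x ≥ 2^{k+1}·k, one has g_k(x) < (1/2)·g_h(x + 2^k). -/
/-!
Since `1 / (x + ℓ) = ∫₀¹ t^(x+ℓ-1) dt`, we have `g_m(x) = ∫₀¹ t^(x-1) P_m(t) dt` with
`P_m(t) = ∑_{ℓ < 2^m} ε_ℓ t^ℓ = ∏_{j < m} (1 - t^(2^j))`, a product of factors in `[0, 1]`, and
shifting `x` by `b` multiplies the integrand by `t^b`. With `a = 2^(k-1)` and `u = t^a` we have
`P_k ≤ P_h (1 - u)`, and `(u - 7/10)² ≥ 0` then gives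
`g_k(x) + 17/10 g_h(x + a) ≤ 1/2 g_h(x + 2a) + 249/200 g_h(x)`.
It remains to show `249/200 g_h(x) < 17/10 g_h(x + a)`. The function `x g_h(x)` decreases
slowly, `x g_h(x) - (x + a) g_h(x + a) ≤ a h g_h(x)`, because
`x g_h(x) = P_h(1) + ∫₀¹ t^(x-1) (-t P_h'(t)) dt` and the logarithmic derivative of the product
gives `0 ≤ (1 - t)(-t P_h'(t)) ≤ h P_h(t)`. For `x ≥ 2^(k+1) k` this loss is small enough.
-/

open Finset

lemma tmSign_two_pow_add {m ℓ : ℕ} (hℓ : ℓ < 2 ^ m) : tmSign (2 ^ m + ℓ) = -tmSign ℓ := by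
  have hlen : (Nat.digits 2 ℓ).length ≤ m := (Nat.digits_length_le_iff one_lt_two ℓ).2 hℓ
  have hdigits := Nat.digits_append_zeroes_append_digits (b := 2)
    (k := m - (Nat.digits 2 ℓ).length) (m := 1) (n := ℓ) one_lt_two one_pos
  rw [Nat.add_sub_cancel' hlen, mul_one, add_comm] at hdigits
  simp only [tmSign, ← hdigits, List.sum_append, List.sum_replicate, smul_zero, add_zero,
    Nat.digits_of_lt 2 1 one_ne_zero one_lt_two, List.sum_singleton, pow_succ, mul_neg_one]

lemma sum_range_two_pow_succ_tmSign_mul (m : ℕ) (f : ℕ → ℝ) :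
    ∑ ℓ ∈ range (2 ^ (m + 1)), tmSign ℓ * f ℓ
      = ∑ ℓ ∈ range (2 ^ m), tmSign ℓ * (f ℓ - f (2 ^ m + ℓ)) := by
  rw [pow_succ, mul_two, sum_range_add, ← sum_add_distrib]
  exact sum_congr rfl fun ℓ hℓ => by rw [tmSign_two_pow_add (mem_range.1 hℓ)]; ring

noncomputable def tmPoly (m : ℕ) (t : ℝ) : ℝ := ∑ ℓ ∈ range (2 ^ m), tmSign ℓ * t ^ ℓ

/-- `t · (d/dt) tmPoly m t`. -/
noncomputable def tmEuler (m : ℕ) (t : ℝ) : ℝ := ∑ ℓ ∈ range (2 ^ m), tmSign ℓ * (ℓ * t ^ ℓ)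

@[simp] lemma tmPoly_zero (t : ℝ) : tmPoly 0 t = 1 := by simp [tmPoly, tmSign]

lemma tmPoly_succ (m : ℕ) (t : ℝ) : tmPoly (m + 1) t = tmPoly m t * (1 - t ^ 2 ^ m) := by
  rw [tmPoly, tmPoly, sum_range_two_pow_succ_tmSign_mul, sum_mul]
  exact sum_congr rfl fun ℓ _ => by ring

@[simp] lemma tmEuler_zero (t : ℝ) : tmEuler 0 t = 0 := by simp [tmEuler]

lemma tmEuler_succ (m : ℕ) (t : ℝ) :
    tmEuler (m + 1) t = tmEuler m t * (1 - t ^ 2 ^ m) - 2 ^ m * t ^ 2 ^ m * tmPoly m t := by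
  rw [tmEuler, tmEuler, tmPoly, sum_range_two_pow_succ_tmSign_mul, sum_mul, mul_sum,
    ← sum_sub_distrib]
  refine sum_congr rfl fun ℓ _ => ?_
  push_cast
  ring

section UnitInterval

variable {t : ℝ}

lemma natCast_mul_pow_mul_one_sub_le (h0 : 0 ≤ t) (h1 : t ≤ 1) (q : ℕ) :
    q * t ^ q * (1 - t) ≤ 1 - t ^ q := by
  have hgeom := geom_sum_mul t q
  have hsum : q * t ^ q ≤ ∑ i ∈ range q, t ^ i := by
    simpa using card_nsmul_le_sum (range q) (t ^ ·) (t ^ q)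
      fun i hi => pow_le_pow_of_le_one h0 h1 (mem_range.1 hi).le
  nlinarith

lemma tmPoly_nonneg (h0 : 0 ≤ t) (h1 : t ≤ 1) (m : ℕ) : 0 ≤ tmPoly m t := by
  induction m with
  | zero => simp
  | succ m ih => rw [tmPoly_succ]; exact mul_nonneg ih (sub_nonneg.2 (pow_le_one₀ h0 h1))

lemma tmPoly_le_of_le (h0 : 0 ≤ t) (h1 : t ≤ 1) {h m : ℕ} (hhm : h ≤ m) :
    tmPoly m t ≤ tmPoly h t := by
  induction m, hhm using Nat.le_induction with
  | base => rfl
  | succ m _ ih =>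
    rw [tmPoly_succ]
    nlinarith [tmPoly_nonneg h0 h1 m, pow_nonneg h0 (2 ^ m)]

lemma tmEuler_nonpos (h0 : 0 ≤ t) (h1 : t ≤ 1) (m : ℕ) : tmEuler m t ≤ 0 := by
  induction m with
  | zero => simp
  | succ m ih =>
    rw [tmEuler_succ]
    have hfac : 0 ≤ 1 - t ^ 2 ^ m := sub_nonneg.2 (pow_le_one₀ h0 h1)
    have hS : 0 ≤ 2 ^ m * t ^ 2 ^ m * tmPoly m t :=
      mul_nonneg (by positivity) (tmPoly_nonneg h0 h1 m)
    nlinarith [mul_nonpos_of_nonpos_of_nonneg ih hfac]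

lemma one_sub_mul_neg_tmEuler_le (h0 : 0 ≤ t) (h1 : t ≤ 1) (m : ℕ) :
    (1 - t) * -tmEuler m t ≤ m * tmPoly m t := by
  induction m with
  | zero => simp
  | succ m ih =>
    have hq := natCast_mul_pow_mul_one_sub_le h0 h1 (2 ^ m)
    have hfac : 0 ≤ 1 - t ^ 2 ^ m := sub_nonneg.2 (pow_le_one₀ h0 h1)
    rw [tmEuler_succ, tmPoly_succ]
    push_cast at hq ⊢
    nlinarith [mul_le_mul_of_nonneg_right ih hfac,
      mul_le_mul_of_nonneg_left hq (tmPoly_nonneg h0 h1 m)]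

end UnitInterval

lemma tmPoly_pos {t : ℝ} (h0 : 0 ≤ t) (h1 : t < 1) (m : ℕ) : 0 < tmPoly m t := by
  induction m with
  | zero => simp
  | succ m ih =>
    rw [tmPoly_succ]
    exact mul_pos ih (sub_pos.2 (pow_lt_one₀ h0 h1 (by positivity)))

@[fun_prop] lemma continuous_tmPoly (m : ℕ) : Continuous (tmPoly m) := by
  unfold tmPoly; fun_prop

@[fun_prop] lemma continuous_tmEuler (m : ℕ) : Continuous (tmEuler m) := by
  unfold tmEuler; fun_prop

noncomputable def truncMellin (f : ℝ → ℝ) (y : ℝ) : ℝ := ∫ t in (0 : ℝ)..1, t ^ (y - 1) * f t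

section TruncMellin

open intervalIntegral MeasureTheory

variable {f g : ℝ → ℝ} {y : ℝ}

lemma intervalIntegrable_rpow_sub_one_mul (hy : 0 < y) (hf : Continuous f) :
    IntervalIntegrable (fun t => t ^ (y - 1) * f t) volume 0 1 :=
  (intervalIntegrable_rpow' (by linarith)).mul_continuousOn hf.continuousOn

lemma truncMellin_add (hy : 0 < y) (hf : Continuous f) (hg : Continuous g) :
    truncMellin (fun t => f t + g t) y = truncMellin f y + truncMellin g y := by
  simp only [truncMellin, mul_add]
  exact integral_add (intervalIntegrable_rpow_sub_one_mul hy hf)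
    (intervalIntegrable_rpow_sub_one_mul hy hg)

lemma truncMellin_sub (hy : 0 < y) (hf : Continuous f) (hg : Continuous g) :
    truncMellin (fun t => f t - g t) y = truncMellin f y - truncMellin g y := by
  simp only [truncMellin, mul_sub]
  exact integral_sub (intervalIntegrable_rpow_sub_one_mul hy hf)
    (intervalIntegrable_rpow_sub_one_mul hy hg)

lemma truncMellin_const_mul (c : ℝ) (f : ℝ → ℝ) (y : ℝ) :
    truncMellin (fun t => c * f t) y = c * truncMellin f y := by
  simp only [truncMellin, mul_left_comm _ c, intervalIntegral.integral_const_mul]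

lemma truncMellin_finset_sum {ι : Type*} (s : Finset ι) {F : ι → ℝ → ℝ} (hy : 0 < y)
    (hF : ∀ i ∈ s, Continuous (F i)) :
    truncMellin (fun t => ∑ i ∈ s, F i t) y = ∑ i ∈ s, truncMellin (F i) y := by
  simp only [truncMellin, mul_sum]
  exact integral_finsetSum fun i hi => intervalIntegrable_rpow_sub_one_mul hy (hF i hi)

lemma truncMellin_mono (hy : 0 < y) (hf : Continuous f) (hg : Continuous g)
    (hfg : ∀ t ∈ Set.Icc (0 : ℝ) 1, f t ≤ g t) : truncMellin f y ≤ truncMellin g y :=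
  integral_mono_on zero_le_one (intervalIntegrable_rpow_sub_one_mul hy hf)
    (intervalIntegrable_rpow_sub_one_mul hy hg)
    fun t ht => mul_le_mul_of_nonneg_left (hfg t ht) (Real.rpow_nonneg ht.1 _)

lemma truncMellin_pos (hy : 0 < y) (hf : Continuous f)
    (hpos : ∀ t ∈ Set.Ioo (0 : ℝ) 1, 0 < f t) : 0 < truncMellin f y :=
  intervalIntegral_pos_of_pos_on (intervalIntegrable_rpow_sub_one_mul hy hf)
    (fun t ht => mul_pos (Real.rpow_pos_of_pos ht.1 _) (hpos t ht)) one_pos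

lemma truncMellin_add_natCast (f : ℝ → ℝ) (y : ℝ) (b : ℕ) :
    truncMellin f (y + b) = truncMellin (fun t => t ^ b * f t) y := by
  rw [truncMellin, truncMellin, integral_of_le zero_le_one, integral_of_le zero_le_one]
  refine setIntegral_congr_fun measurableSet_Ioc fun t ht => ?_
  rw [add_sub_right_comm, Real.rpow_add_natCast ht.1.ne', mul_assoc]

lemma truncMellin_pow (hy : 0 < y) (ℓ : ℕ) : truncMellin (fun t => t ^ ℓ) y = 1 / (y + ℓ) := by
  have hyℓ : 0 < y + ℓ := by positivity
  have := truncMellin_add_natCast (fun _ => 1) y ℓ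
  simp only [mul_one] at this
  rw [← this, truncMellin]
  simp only [mul_one]
  rw [integral_rpow (Or.inl (by linarith)), sub_add_cancel, Real.one_rpow,
    Real.zero_rpow hyℓ.ne']
  ring

lemma sum_div_add_eq_truncMellin (s : Finset ℕ) (c : ℕ → ℝ) (hy : 0 < y) :
    ∑ ℓ ∈ s, c ℓ / (y + ℓ) = truncMellin (fun t => ∑ ℓ ∈ s, c ℓ * t ^ ℓ) y := by
  rw [truncMellin_finset_sum s hy fun ℓ _ => by fun_prop]
  exact sum_congr rfl fun ℓ _ => by rw [truncMellin_const_mul, truncMellin_pow hy, mul_one_div]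

end TruncMellin

lemma gFun_eq_truncMellin (m : ℕ) {y : ℝ} (hy : 0 < y) : gFun m y = truncMellin (tmPoly m) y :=
  sum_div_add_eq_truncMellin _ _ hy

lemma mul_gFun_eq (m : ℕ) {y : ℝ} (hy : 0 < y) :
    y * gFun m y = tmPoly m 1 - truncMellin (tmEuler m) y := by
  have hEuler : truncMellin (tmEuler m) y = ∑ ℓ ∈ range (2 ^ m), tmSign ℓ * ℓ / (y + ℓ) := by
    simp only [sum_div_add_eq_truncMellin _ _ hy, mul_assoc]
    rfl
  rw [hEuler, gFun, tmPoly, mul_sum, ← sum_sub_distrib]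
  refine sum_congr rfl fun ℓ _ => ?_
  field_simp
  ring

lemma gFun_pos (m : ℕ) {y : ℝ} (hy : 0 < y) : 0 < gFun m y := by
  rw [gFun_eq_truncMellin m hy]
  exact truncMellin_pos hy (continuous_tmPoly m) fun t ht => tmPoly_pos ht.1.le ht.2 m

lemma mul_gFun_sub_le (m a : ℕ) {x : ℝ} (hx : 0 < x) :
    x * gFun m x - (x + a) * gFun m (x + a) ≤ a * m * gFun m x := by
  rw [mul_gFun_eq m hx, mul_gFun_eq m (by positivity), truncMellin_add_natCast,
    sub_sub_sub_cancel_left, ← truncMellin_sub hx (by fun_prop) (by fun_prop),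
    gFun_eq_truncMellin m hx, ← truncMellin_const_mul]
  refine truncMellin_mono hx (by fun_prop) (by fun_prop) fun t ⟨h0, h1⟩ => ?_
  have hBernoulli : 1 - t ^ a ≤ a * (1 - t) := by
    nlinarith [one_add_mul_sub_le_pow (by linarith : (-1 : ℝ) ≤ t) a]
  have hD := tmEuler_nonpos h0 h1 m
  have hDS := one_sub_mul_neg_tmEuler_le h0 h1 m
  have ha : (0 : ℝ) ≤ a := a.cast_nonneg
  calc t ^ a * tmEuler m t - tmEuler m t = (1 - t ^ a) * -tmEuler m t := by ring
    _ ≤ a * (1 - t) * -tmEuler m t := mul_le_mul_of_nonneg_right hBernoulli (by linarith)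
    _ ≤ a * m * tmPoly m t := by rw [mul_assoc, mul_assoc]; exact mul_le_mul_of_nonneg_left hDS ha

-- The constants come from `1/2 u² - 17/10 u + 249/200 - (1 - u) = 1/2 (u - 7/10)²`.
lemma tmPoly_succ_add_le {h n : ℕ} (hhn : h ≤ n) {t : ℝ} (h0 : 0 ≤ t) (h1 : t ≤ 1) :
    tmPoly (n + 1) t + 17 / 10 * (t ^ 2 ^ n * tmPoly h t)
      ≤ 1 / 2 * (t ^ 2 ^ (n + 1) * tmPoly h t) + 249 / 200 * tmPoly h t := by
  have hchop : tmPoly (n + 1) t ≤ tmPoly h t * (1 - t ^ 2 ^ n) := by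
    rw [tmPoly_succ]
    exact mul_le_mul_of_nonneg_right (tmPoly_le_of_le h0 h1 hhn)
      (sub_nonneg.2 (pow_le_one₀ h0 h1))
  have hsq := mul_nonneg (tmPoly_nonneg h0 h1 h) (sq_nonneg (t ^ 2 ^ n - 7 / 10))
  rw [pow_succ, pow_mul]
  nlinarith

lemma gFun_succ_add_le {h n : ℕ} (hhn : h ≤ n) {x : ℝ} (hx : 0 < x) :
    gFun (n + 1) x + 17 / 10 * gFun h (x + 2 ^ n)
      ≤ 1 / 2 * gFun h (x + 2 ^ (n + 1)) + 249 / 200 * gFun h x := by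
  have hshift (b : ℕ) :
      gFun h (x + (2 : ℝ) ^ b) = truncMellin (fun t => t ^ 2 ^ b * tmPoly h t) x := by
    rw [gFun_eq_truncMellin h (by positivity), ← truncMellin_add_natCast]
    push_cast
    rfl
  rw [hshift, hshift, gFun_eq_truncMellin _ hx, gFun_eq_truncMellin _ hx,
    ← truncMellin_const_mul, ← truncMellin_const_mul, ← truncMellin_const_mul,
    ← truncMellin_add hx (by fun_prop) (by fun_prop),
    ← truncMellin_add hx (by fun_prop) (by fun_prop)]
  exact truncMellin_mono hx (by fun_prop) (by fun_prop) fun t ⟨h0, h1⟩ =>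
    tmPoly_succ_add_le hhn h0 h1

/-- for integers `k ≥ 1` and `0 ≤ h < k`, and every real
`x ≥ 2^{k+1}·k`, one has `g_k(x) < (1/2)·g_h(x + 2^k)`. -/
theorem stmt_7 (k h : ℕ) (hk : 1 ≤ k) (hh : h < k) (x : ℝ)
    (hx : 2 ^ (k + 1) * (k : ℝ) ≤ x) :
    gFun k x < 1 / 2 * gFun h (x + 2 ^ k) := by
  obtain ⟨n, rfl⟩ : ∃ n, k = n + 1 := ⟨k - 1, by omega⟩
  set A : ℝ := 2 ^ n with hA
  have hA1 : 1 ≤ A := one_le_pow₀ one_le_two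
  have hx' : 4 * A * (n + 1) ≤ x := by
    have h4 : (2 : ℝ) ^ (n + 1 + 1) = 4 * A := by rw [hA]; ring
    push_cast [h4] at hx
    exact hx
  have hx0 : 0 < x := by nlinarith
  have hAh : A * h ≤ A * n := by gcongr; exact_mod_cast Nat.lt_succ_iff.1 hh
  have hcoef : 249 / 200 * (x + A) < 17 / 10 * (x - A * h) := by nlinarith
  have hratio := mul_gFun_sub_le h (2 ^ n) hx0
  push_cast at hratio
  have hgain : 249 / 200 * gFun h x < 17 / 10 * gFun h (x + A) := by
    refine lt_of_mul_lt_mul_left ?_ (by positivity : 0 ≤ x + A)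
    nlinarith [mul_lt_mul_of_pos_right hcoef (gFun_pos h hx0)]
  linarith [gFun_succ_add_le (Nat.lt_succ_iff.1 hh) hx0]
end

section
/- Let r = ∑_{0≤j≤q} 2^{h_j} be a positive integer with h_0 > h_1 > ⋯ > h_q ≥ 0, let k be an integer with r < 2^k, and let x be a real number with x ≥ 2^{k+1}·(k+1). Then (−1)^q · ∑_{0 ≤ ℓ < r} ε_ℓ/(x+ℓ) > g_k(x − 2^k) > g_k(x) > 0. -/
/-!
Write `G_m^{(p)}(y) = ∑_{ℓ < 2^m} ε_ℓ / (y + ℓ)^{p+1}` (`tmBlockSum m p y`), so that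
`g_k = G_k^{(0)}`. Since `ε_{2^m + ℓ} = -ε_ℓ` for `ℓ < 2^m`, we have
`G_{m+1}^{(p)}(y) = G_m^{(p)}(y) - G_m^{(p)}(y + 2^m)`: `G_m^{(p)}` is an `m`-fold finite
difference of `y ↦ y^{-(p+1)}`, and the mean value theorem gives
`C_m^{(p)} / (y + 2^m)^{m+p+1} ≤ G_m^{(p)}(y) ≤ C_m^{(p)} / y^{m+p+1}` with
`C_m^{(p)} = ∏_{i<m} 2^i (p+1+i)` (`tmBlockCoeff m p`). In particular `g_k` is positive and
decreasing.

Cutting `[0, r)` into the dyadic blocks `[r_{j-1}, r_j)`, `r_j = 2^{h_0} + ⋯ + 2^{h_j}`, the block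
of length `2^{h_j}` contributes `(-1)^j G_{h_j}(x + r_{j-1})`, so `(-1)^q` times the partial sum is
`G_{h_q}(x + r_{q-1})` minus the previous signed partial sum. Induction on `q` keeps it between
`g_k(x - 2^k)` and its newest block. The lower bound comes down to
`G_a(u + 2^b) - G_b(u) > G_k(y)` for `a < b < k`: peeling one level off `G_b` and using the
bounds above, the left side is at least of order `C_a / u^{a+1}`, while for `y ≥ k 2^{k+1}` the
right side is at most `C_a / (4^{k-a} y^{a+1})`.
-/

open Finset

theorem tmSign_zero : tmSign 0 = 1 := by simp [tmSign]

theorem tmSign_two_pow_mul_add {e ℓ : ℕ} (c : ℕ) (hℓ : ℓ < 2 ^ e) :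
    tmSign (2 ^ e * c + ℓ) = tmSign c * tmSign ℓ := by
  rcases Nat.eq_zero_or_pos c with rfl | hc
  · simp [tmSign]
  have hlen : (Nat.digits 2 ℓ).length ≤ e := (Nat.digits_length_le_iff one_lt_two ℓ).mpr hℓ
  have hdigits := Nat.digits_append_zeroes_append_digits
    (k := e - (Nat.digits 2 ℓ).length) (n := ℓ) one_lt_two hc
  rw [Nat.add_sub_cancel' hlen, add_comm ℓ] at hdigits
  rw [tmSign, ← hdigits]
  simp only [List.sum_append, List.sum_replicate, smul_zero, add_zero, pow_add, tmSign, mul_comm]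

theorem tmSign_add_of_dvd {e m ℓ : ℕ} (hm : 2 ^ e ∣ m) (hℓ : ℓ < 2 ^ e) :
    tmSign (m + ℓ) = tmSign m * tmSign ℓ := by
  obtain ⟨c, rfl⟩ := hm
  have h0 := tmSign_two_pow_mul_add c (Nat.two_pow_pos e)
  rw [add_zero, tmSign_zero, mul_one] at h0
  rw [tmSign_two_pow_mul_add c hℓ, h0]

theorem tmSign_two_pow (e : ℕ) : tmSign (2 ^ e) = -1 := by
  simpa [tmSign] using tmSign_two_pow_mul_add (e := e) (ℓ := 0) 1 (Nat.two_pow_pos e)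

theorem tmSign_sum_two_pow {h : ℕ → ℕ} {n : ℕ} (hh : StrictAntiOn h (Set.Iio n)) :
    tmSign (∑ j ∈ range n, 2 ^ h j) = (-1) ^ n := by
  induction n with
  | zero => simp [tmSign]
  | succ n ih =>
    have hdvd : 2 ^ (h n + 1) ∣ ∑ j ∈ range n, 2 ^ h j := by
      refine dvd_sum fun j hj => pow_dvd_pow 2 (hh ?_ ?_ (mem_range.1 hj))
      · exact Set.mem_Iio.2 ((mem_range.1 hj).trans (lt_add_one n))
      · exact Set.mem_Iio.2 (lt_add_one n)
    rw [sum_range_succ, tmSign_add_of_dvd hdvd (Nat.pow_lt_pow_succ one_lt_two),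
      ih (hh.mono (Set.Iio_subset_Iio (Nat.le_succ n))), tmSign_two_pow, pow_succ]

noncomputable def tmBlockSum (m p : ℕ) (y : ℝ) : ℝ :=
  ∑ ℓ ∈ range (2 ^ m), tmSign ℓ / (y + ℓ) ^ (p + 1)

noncomputable def tmBlockCoeff (m p : ℕ) : ℝ :=
  ∏ i ∈ range m, (2 : ℝ) ^ i * (p + 1 + i)

theorem gFun_eq_tmBlockSum (k : ℕ) : gFun k = tmBlockSum k 0 := by
  funext x
  simp [gFun, tmBlockSum]

theorem tmBlockSum_zero (p : ℕ) (y : ℝ) : tmBlockSum 0 p y = 1 / y ^ (p + 1) := by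
  simp [tmBlockSum, tmSign_zero]

theorem tmBlockSum_succ (m p : ℕ) (y : ℝ) :
    tmBlockSum (m + 1) p y = tmBlockSum m p y - tmBlockSum m p (y + 2 ^ m) := by
  have hsecond : ∀ ℓ ∈ range (2 ^ m), tmSign (2 ^ m + ℓ) / (y + ↑(2 ^ m + ℓ)) ^ (p + 1)
      = -(tmSign ℓ / (y + 2 ^ m + ℓ) ^ (p + 1)) := fun ℓ hℓ => by
    rw [tmSign_add_of_dvd dvd_rfl (mem_range.1 hℓ), tmSign_two_pow]
    push_cast
    ring_nf
  rw [tmBlockSum, pow_succ, mul_two, sum_range_add, sum_congr rfl hsecond, sum_neg_distrib]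
  rfl

theorem hasDerivAt_tmBlockSum (m p : ℕ) {y : ℝ} (hy : 0 < y) :
    HasDerivAt (tmBlockSum m p) (-(p + 1) * tmBlockSum m (p + 1) y) y := by
  have hterm : ∀ ℓ ∈ range (2 ^ m),
      HasDerivAt (fun z : ℝ => tmSign ℓ / (z + ℓ) ^ (p + 1))
        (-(p + 1) * (tmSign ℓ / (y + ℓ) ^ (p + 1 + 1))) y := fun ℓ _ => by
    have hyℓ : y + ℓ ≠ 0 := by positivity
    have hpow := ((hasDerivAt_id y).add_const (ℓ : ℝ)).fun_pow (p + 1)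
    refine ((hasDerivAt_const y (tmSign ℓ)).fun_div hpow (pow_ne_zero _ hyℓ)).congr_deriv ?_
    simp only [id, Nat.add_sub_cancel]
    field_simp
    push_cast
    ring
  have hsum := HasDerivAt.fun_sum hterm
  rw [← mul_sum] at hsum
  exact hsum

theorem exists_tmBlockSum_sub_eq (m p : ℕ) {y z : ℝ} (hy : 0 < y) (hyz : y < z) :
    ∃ ξ ∈ Set.Ioo y z,
      tmBlockSum m p y - tmBlockSum m p z = (z - y) * ((p + 1) * tmBlockSum m (p + 1) ξ) := by
  obtain ⟨ξ, hξ, hslope⟩ := exists_hasDerivAt_eq_slope (tmBlockSum m p)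
    (fun t => -(p + 1) * tmBlockSum m (p + 1) t) hyz
    (fun t ht => (hasDerivAt_tmBlockSum m p (hy.trans_le ht.1)).continuousAt.continuousWithinAt)
    (fun t ht => hasDerivAt_tmBlockSum m p (hy.trans ht.1))
  refine ⟨ξ, hξ, ?_⟩
  rw [eq_div_iff (sub_ne_zero.2 hyz.ne')] at hslope
  linarith

theorem tmBlockCoeff_succ (m p : ℕ) :
    tmBlockCoeff (m + 1) p = 2 ^ m * (p + 1) * tmBlockCoeff m (p + 1) := by
  simp only [tmBlockCoeff, prod_range_succ', pow_succ, prod_mul_distrib, prod_const, card_range]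
  push_cast
  ring_nf

theorem tmBlockCoeff_pos (m p : ℕ) : 0 < tmBlockCoeff m p :=
  prod_pos fun i _ => by positivity

theorem mul_tmBlockCoeff_succ (m p : ℕ) :
    (p + 1) * tmBlockCoeff m (p + 1) = (m + p + 1) * tmBlockCoeff m p := by
  induction m with
  | zero => simp [tmBlockCoeff]
  | succ m ih =>
    simp only [tmBlockCoeff, prod_range_succ] at ih ⊢
    push_cast at ih ⊢
    linear_combination (2 ^ m * (m + (p + 1) + 1)) * ih

theorem tmBlockSum_le_tmBlockCoeff_div (m p : ℕ) {y : ℝ} (hy : 0 < y) :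
    tmBlockSum m p y ≤ tmBlockCoeff m p / y ^ (m + p + 1) := by
  induction m generalizing p y with
  | zero => simp [tmBlockSum_zero, tmBlockCoeff]
  | succ m ih =>
    obtain ⟨ξ, hξ, hdiff⟩ :=
      exists_tmBlockSum_sub_eq m p hy (lt_add_of_pos_right y (by positivity : (0 : ℝ) < 2 ^ m))
    have hξ_bound : tmBlockSum m (p + 1) ξ ≤ tmBlockCoeff m (p + 1) / y ^ (m + (p + 1) + 1) :=
      (ih (p + 1) (hy.trans hξ.1)).trans
        (div_le_div_of_nonneg_left (tmBlockCoeff_pos _ _).le (by positivity)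
          (pow_le_pow_left₀ hy.le hξ.1.le _))
    rw [tmBlockSum_succ, hdiff, tmBlockCoeff_succ, add_sub_cancel_left,
      show m + 1 + p + 1 = m + (p + 1) + 1 by ring, mul_assoc, mul_div_assoc, mul_div_assoc]
    gcongr

theorem tmBlockCoeff_div_le_tmBlockSum (m p : ℕ) {y : ℝ} (hy : 0 < y) :
    tmBlockCoeff m p / (y + 2 ^ m) ^ (m + p + 1) ≤ tmBlockSum m p y := by
  induction m generalizing p y with
  | zero =>
    simp only [tmBlockSum_zero, tmBlockCoeff, prod_range_zero, pow_zero, zero_add]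
    gcongr
    linarith
  | succ m ih =>
    obtain ⟨ξ, hξ, hdiff⟩ :=
      exists_tmBlockSum_sub_eq m p hy (lt_add_of_pos_right y (by positivity : (0 : ℝ) < 2 ^ m))
    have hξ_pos : 0 < ξ := hy.trans hξ.1
    have hξ_bound : tmBlockCoeff m (p + 1) / (y + 2 ^ (m + 1)) ^ (m + (p + 1) + 1)
        ≤ tmBlockSum m (p + 1) ξ := by
      refine le_trans (div_le_div_of_nonneg_left (tmBlockCoeff_pos _ _).le
          (pow_pos (by positivity) _) (pow_le_pow_left₀ (by positivity) ?_ _))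
        (ih (p + 1) hξ_pos)
      rw [pow_succ]
      linarith [hξ.2]
    rw [tmBlockSum_succ, hdiff, tmBlockCoeff_succ, add_sub_cancel_left,
      show m + 1 + p + 1 = m + (p + 1) + 1 by ring, mul_assoc, mul_div_assoc, mul_div_assoc]
    gcongr

theorem tmBlockSum_pos (m p : ℕ) {y : ℝ} (hy : 0 < y) : 0 < tmBlockSum m p y :=
  (div_pos (tmBlockCoeff_pos m p) (by positivity)).trans_le (tmBlockCoeff_div_le_tmBlockSum m p hy)

theorem tmBlockSum_strictAntiOn (m p : ℕ) : StrictAntiOn (tmBlockSum m p) (Set.Ioi 0) := by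
  intro y hy z _ hyz
  obtain ⟨ξ, hξ, hdiff⟩ := exists_tmBlockSum_sub_eq m p hy hyz
  have hξ_pos := tmBlockSum_pos m (p + 1) (hy.trans hξ.1)
  have hzy := sub_pos.2 hyz
  have hdiff_pos : 0 < (z - y) * ((p + 1) * tmBlockSum m (p + 1) ξ) := by positivity
  linarith

theorem tmBlockSum_sub_le (m p : ℕ) {y z : ℝ} (hy : 0 < y) (hyz : y < z) :
    tmBlockSum m p y - tmBlockSum m p z
      ≤ (z - y) * ((m + p + 1) * tmBlockCoeff m p / y ^ (m + p + 2)) := by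
  obtain ⟨ξ, hξ, hdiff⟩ := exists_tmBlockSum_sub_eq m p hy hyz
  have hξ_bound : tmBlockSum m (p + 1) ξ ≤ tmBlockCoeff m (p + 1) / y ^ (m + p + 2) :=
    (tmBlockSum_le_tmBlockCoeff_div m (p + 1) (hy.trans hξ.1)).trans
      (div_le_div_of_nonneg_left (tmBlockCoeff_pos _ _).le (by positivity)
        (pow_le_pow_left₀ hy.le hξ.1.le _))
  rw [hdiff, ← mul_tmBlockCoeff_succ, mul_div_assoc]
  gcongr

theorem tmBlockSum_le_of_le (p : ℕ) {a b : ℕ} (hab : a ≤ b) {y : ℝ} (hy : 0 < y) :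
    tmBlockSum b p y ≤ tmBlockSum a p y := by
  induction b, hab using Nat.le_induction with
  | base => rfl
  | succ b _ ih =>
    rw [tmBlockSum_succ]
    linarith [tmBlockSum_pos b p (y := y + 2 ^ b) (by positivity)]

theorem add_pow_le_exp_mul_pow {y d : ℝ} (hy : 0 < y) (hd : 0 ≤ d) (n : ℕ) :
    (y + d) ^ n ≤ Real.exp (n * d / y) * y ^ n := by
  have hbase : y + d ≤ y * Real.exp (d / y) :=
    calc y + d = y * (d / y + 1) := by field_simp; ring
      _ ≤ y * Real.exp (d / y) := by gcongr; exact Real.add_one_le_exp _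
  calc (y + d) ^ n ≤ (y * Real.exp (d / y)) ^ n := pow_le_pow_left₀ (by positivity) hbase n
    _ = Real.exp (n * d / y) * y ^ n := by
        rw [mul_pow, ← Real.exp_nat_mul, mul_div_assoc, mul_comm]

theorem add_pow_le_three_mul_pow {y d : ℝ} {n : ℕ} (hy : 0 < y) (hd : 0 ≤ d)
    (hnd : n * d ≤ y) : (y + d) ^ n ≤ 3 * y ^ n := by
  have hexp : Real.exp (n * d / y) ≤ 3 :=
    (Real.exp_le_exp.2 ((div_le_one hy).2 hnd)).trans Real.exp_one_lt_three.le
  exact (add_pow_le_exp_mul_pow hy hd n).trans (by gcongr)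

theorem add_pow_le_two_mul_pow {y d : ℝ} {n : ℕ} (hy : 0 < y) (hd : 0 ≤ d)
    (hnd : 4 * (n * d) ≤ y) : (y + d) ^ n ≤ 2 * y ^ n := by
  have hexp : Real.exp (n * d / y) ≤ 2 :=
    calc Real.exp (n * d / y) ≤ Real.exp (1 / 4) := Real.exp_le_exp.2 (by
          rw [div_le_iff₀ hy]; linarith)
      _ ≤ 1 / (1 - 1 / 4) := Real.exp_bound_div_one_sub_of_interval (by norm_num) (by norm_num)
      _ ≤ 2 := by norm_num
  exact (add_pow_le_exp_mul_pow hy hd n).trans (by gcongr)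

theorem four_pow_mul_tmBlockCoeff_le (p : ℕ) {a k : ℕ} (hak : a ≤ k) {y : ℝ}
    (hy : 2 ^ (k + 1) * ((p : ℝ) + k) ≤ y) :
    4 ^ (k - a) * tmBlockCoeff k p ≤ tmBlockCoeff a p * y ^ (k - a) := by
  have hfactor : ∀ i ∈ Ico a k, 4 * (2 ^ i * ((p : ℝ) + 1 + i)) ≤ y := fun i hi => by
    have hik := (mem_Ico.1 hi).2
    have hpow : (2 : ℝ) ^ (i + 2) ≤ 2 ^ (k + 1) := pow_le_pow_right₀ one_le_two (by omega)
    have hlin : (p : ℝ) + 1 + i ≤ p + k := by exact_mod_cast (by omega : p + 1 + i ≤ p + k)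
    calc 4 * (2 ^ i * ((p : ℝ) + 1 + i)) = 2 ^ (i + 2) * (p + 1 + i) := by ring
      _ ≤ 2 ^ (k + 1) * (p + k) := by gcongr
      _ ≤ y := hy
  calc 4 ^ (k - a) * tmBlockCoeff k p
      = tmBlockCoeff a p * ∏ i ∈ Ico a k, 4 * (2 ^ i * ((p : ℝ) + 1 + i)) := by
        rw [tmBlockCoeff, tmBlockCoeff, ← prod_range_mul_prod_Ico _ hak, mul_left_comm,
          ← Nat.card_Ico a k, ← prod_const, ← prod_mul_distrib]
    _ ≤ tmBlockCoeff a p * ∏ i ∈ Ico a k, y :=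
        mul_le_mul_of_nonneg_left (prod_le_prod (fun i _ => by positivity) hfactor)
          (tmBlockCoeff_pos a p).le
    _ = tmBlockCoeff a p * y ^ (k - a) := by rw [prod_const, Nat.card_Ico]

theorem four_pow_mul_tmBlockSum_le (p : ℕ) {a k : ℕ} (hak : a ≤ k) {y : ℝ} (hy0 : 0 < y)
    (hy : 2 ^ (k + 1) * ((p : ℝ) + k) ≤ y) :
    4 ^ (k - a) * tmBlockSum k p y ≤ tmBlockCoeff a p / y ^ (a + p + 1) :=
  calc 4 ^ (k - a) * tmBlockSum k p y ≤ 4 ^ (k - a) * (tmBlockCoeff k p / y ^ (k + p + 1)) := by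
        gcongr
        exact tmBlockSum_le_tmBlockCoeff_div k p hy0
    _ ≤ tmBlockCoeff a p * y ^ (k - a) / y ^ (k + p + 1) := by
        rw [← mul_div_assoc]
        exact div_le_div_of_nonneg_right (four_pow_mul_tmBlockCoeff_le p hak hy) (by positivity)
    _ = tmBlockCoeff a p / y ^ (a + p + 1) := by
        rw [show k + p + 1 = (k - a) + (a + p + 1) by omega, pow_add]
        field_simp

theorem tmBlockSum_lt_tmBlockSum_add_two_pow {h k : ℕ} (hhk : h < k) {y : ℝ}
    (hy : 2 ^ (k + 1) * (k : ℝ) ≤ y) :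
    tmBlockSum k 0 y < tmBlockSum h 0 (y + 2 ^ k) := by
  have hk : (h : ℝ) + 1 ≤ k := by exact_mod_cast hhk
  have hy0 : 0 < y := (mul_pos (by positivity) (by exact_mod_cast hhk.pos)).trans_le hy
  have hC := tmBlockCoeff_pos h 0
  have hfar : 4 * tmBlockSum k 0 y ≤ tmBlockCoeff h 0 / y ^ (h + 1) := by
    have h4 : (4 : ℝ) ≤ 4 ^ (k - h) := le_self_pow₀ (by norm_num) (by omega)
    have := four_pow_mul_tmBlockSum_le 0 hhk.le hy0 (by simpa using hy)
    nlinarith [tmBlockSum_pos k 0 hy0]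
  have hpow : (y + 2 ^ k + 2 ^ h) ^ (h + 1) ≤ 3 * y ^ (h + 1) := by
    have h2h : (2 : ℝ) ^ h ≤ 2 ^ k := pow_le_pow_right₀ one_le_two hhk.le
    rw [add_assoc]
    refine add_pow_le_three_mul_pow hy0 (by positivity) ?_
    push_cast
    calc ((h : ℝ) + 1) * (2 ^ k + 2 ^ h) ≤ k * (2 ^ k + 2 ^ k) := by gcongr
      _ = 2 ^ (k + 1) * k := by ring
      _ ≤ y := hy
  calc tmBlockSum k 0 y ≤ tmBlockCoeff h 0 / y ^ (h + 1) / 4 := by linarith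
    _ = tmBlockCoeff h 0 / (4 * y ^ (h + 1)) := by rw [div_div, mul_comm]
    _ < tmBlockCoeff h 0 / (3 * y ^ (h + 1)) := by
        gcongr
        norm_num
    _ ≤ tmBlockCoeff h 0 / (y + 2 ^ k + 2 ^ h) ^ (h + 1) := by gcongr
    _ ≤ tmBlockSum h 0 (y + 2 ^ k) := by
        simpa using tmBlockCoeff_div_le_tmBlockSum h 0 (y := y + 2 ^ k) (by positivity)

theorem tmBlockCoeff_div_le_tmBlockSum_sub {a b : ℕ} (hab : a < b) {u : ℝ} (hu0 : 0 < u)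
    (hu : 4 * (2 ^ b * ((a : ℝ) + 1)) ≤ u) :
    tmBlockCoeff a 0 / (4 * u ^ (a + 1)) ≤ tmBlockSum a 0 (u + 2 ^ b) - tmBlockSum b 0 u := by
  have hC := tmBlockCoeff_pos a 0
  have hpeel : tmBlockSum b 0 u ≤ tmBlockSum a 0 u - tmBlockSum a 0 (u + 2 ^ a) := by
    rw [← tmBlockSum_succ]
    exact tmBlockSum_le_of_le 0 hab hu0
  have hdiff : tmBlockSum a 0 u - tmBlockSum a 0 (u + 2 ^ b)
      ≤ tmBlockCoeff a 0 / (4 * u ^ (a + 1)) := by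
    have hsub :=
      tmBlockSum_sub_le a 0 hu0 (lt_add_of_pos_right u (by positivity : (0 : ℝ) < 2 ^ b))
    rw [add_sub_cancel_left, Nat.cast_zero, add_zero, add_zero] at hsub
    refine hsub.trans ?_
    calc 2 ^ b * (((a : ℝ) + 1) * tmBlockCoeff a 0 / u ^ (a + 2))
        = tmBlockCoeff a 0 / (4 * u ^ (a + 1)) * (4 * (2 ^ b * ((a : ℝ) + 1)) / u) := by
          field_simp
          ring
      _ ≤ tmBlockCoeff a 0 / (4 * u ^ (a + 1)) * 1 := by
          gcongr
          rwa [div_le_one hu0]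
      _ = tmBlockCoeff a 0 / (4 * u ^ (a + 1)) := mul_one _
  have hnear : tmBlockCoeff a 0 / (2 * u ^ (a + 1)) ≤ tmBlockSum a 0 (u + 2 ^ a) := by
    have h2a : (2 : ℝ) ^ (a + 1) ≤ 2 ^ b := pow_le_pow_right₀ one_le_two hab
    have hpow : (u + 2 ^ (a + 1)) ^ (a + 1) ≤ 2 * u ^ (a + 1) := by
      refine add_pow_le_two_mul_pow hu0 (by positivity) ?_
      push_cast
      nlinarith
    calc tmBlockCoeff a 0 / (2 * u ^ (a + 1))
        ≤ tmBlockCoeff a 0 / (u + 2 ^ a + 2 ^ a) ^ (a + 1) := by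
          rw [add_assoc, ← two_mul, ← pow_succ']
          gcongr
      _ ≤ tmBlockSum a 0 (u + 2 ^ a) := by
          simpa using tmBlockCoeff_div_le_tmBlockSum a 0 (y := u + 2 ^ a) (by positivity)
  have hhalf : tmBlockCoeff a 0 / (2 * u ^ (a + 1))
      = 2 * (tmBlockCoeff a 0 / (4 * u ^ (a + 1))) := by
    field_simp
    norm_num
  linarith

theorem tmBlockSum_lt_tmBlockSum_sub {a b k : ℕ} (hab : a < b) (hbk : b < k) {y u : ℝ}
    (hy : 2 ^ (k + 1) * (k : ℝ) ≤ y) (hyu : y + 2 ^ k ≤ u)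
    (hub : u + 2 ^ b ≤ y + 2 ^ (k + 1)) :
    tmBlockSum k 0 y < tmBlockSum a 0 (u + 2 ^ b) - tmBlockSum b 0 u := by
  have hak : (a : ℝ) + 1 ≤ k := by exact_mod_cast (hab.trans hbk)
  have h2k : (0 : ℝ) < 2 ^ k := by positivity
  have hy0 : 0 < y := (mul_pos (by positivity) (by exact_mod_cast hbk.pos)).trans_le hy
  have hu0 : 0 < u := by linarith
  have hC := tmBlockCoeff_pos a 0
  have hfar : 16 * tmBlockSum k 0 y ≤ tmBlockCoeff a 0 / y ^ (a + 1) := by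
    have h16 : (16 : ℝ) ≤ 4 ^ (k - a) :=
      calc (16 : ℝ) = 4 ^ 2 := by norm_num
        _ ≤ 4 ^ (k - a) := pow_le_pow_right₀ (by norm_num) (by omega)
    have := four_pow_mul_tmBlockSum_le 0 (hab.trans hbk).le hy0 (by simpa using hy)
    nlinarith [tmBlockSum_pos k 0 hy0]
  have hpow : u ^ (a + 1) ≤ 3 * y ^ (a + 1) := by
    refine (pow_le_pow_left₀ hu0.le (by linarith [(by positivity : (0 : ℝ) < 2 ^ b)]) _).trans
      (add_pow_le_three_mul_pow (d := 2 ^ (k + 1)) hy0 (by positivity) ?_)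
    push_cast
    nlinarith [(by positivity : (0 : ℝ) < 2 ^ (k + 1))]
  have hu : 4 * (2 ^ b * ((a : ℝ) + 1)) ≤ u := by
    have h2b : (2 : ℝ) ^ (b + 2) ≤ 2 ^ (k + 1) := pow_le_pow_right₀ one_le_two (by omega)
    calc 4 * (2 ^ b * ((a : ℝ) + 1)) = 2 ^ (b + 2) * (a + 1) := by ring
      _ ≤ 2 ^ (k + 1) * k := by gcongr
      _ ≤ u := by linarith
  calc tmBlockSum k 0 y ≤ tmBlockCoeff a 0 / y ^ (a + 1) / 16 := by linarith
    _ = tmBlockCoeff a 0 / (16 * y ^ (a + 1)) := by rw [div_div, mul_comm]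
    _ < tmBlockCoeff a 0 / (4 * (3 * y ^ (a + 1))) :=
        div_lt_div_of_pos_left hC (by positivity) (by linarith [pow_pos hy0 (a + 1)])
    _ ≤ tmBlockCoeff a 0 / (4 * u ^ (a + 1)) := by gcongr
    _ ≤ tmBlockSum a 0 (u + 2 ^ b) - tmBlockSum b 0 u :=
        tmBlockCoeff_div_le_tmBlockSum_sub hab hu0 hu

noncomputable def tmPartialSum (n : ℕ) (x : ℝ) : ℝ :=
  ∑ ℓ ∈ range n, tmSign ℓ / (x + ℓ)

theorem tmPartialSum_add_two_pow {e m : ℕ} (hm : 2 ^ e ∣ m) (x : ℝ) :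
    tmPartialSum (m + 2 ^ e) x = tmPartialSum m x + tmSign m * tmBlockSum e 0 (x + m) := by
  rw [tmPartialSum, sum_range_add, tmBlockSum, mul_sum]
  congr 1
  refine sum_congr rfl fun ℓ hℓ => ?_
  rw [tmSign_add_of_dvd hm (mem_range.1 hℓ)]
  push_cast
  ring

theorem neg_one_pow_mul_tmPartialSum_succ {q : ℕ} {h : ℕ → ℕ}
    (hh : StrictAntiOn h (Set.Iic (q + 1))) (x : ℝ) :
    (-1) ^ (q + 1) * tmPartialSum (∑ j ∈ range (q + 1 + 1), 2 ^ h j) x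
      = tmBlockSum (h (q + 1)) 0 (x + ∑ j ∈ range (q + 1), 2 ^ h j)
        - (-1) ^ q * tmPartialSum (∑ j ∈ range (q + 1), 2 ^ h j) x := by
  have hdvd : 2 ^ h (q + 1) ∣ ∑ j ∈ range (q + 1), 2 ^ h j := by
    refine dvd_sum fun j hj => pow_dvd_pow 2 (hh ?_ (Set.mem_Iic.2 le_rfl) ?_).le
    · exact Set.mem_Iic.2 (mem_range.1 hj).le
    · exact mem_range.1 hj
  have hsign : tmSign (∑ j ∈ range (q + 1), 2 ^ h j) = (-1) ^ (q + 1) := by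
    rw [tmSign_sum_two_pow]
    rw [Set.Iio_add_one_eq_Iic]
    exact hh.mono (Set.Iic_subset_Iic.2 q.le_succ)
  have hsq : ((-1 : ℝ) ^ q) ^ 2 = 1 := by rw [← pow_mul, pow_mul', neg_one_sq, one_pow]
  rw [sum_range_succ _ (q + 1), tmPartialSum_add_two_pow hdvd, hsign]
  push_cast
  linear_combination tmBlockSum (h (q + 1)) 0 (x + ∑ j ∈ range (q + 1), (2 : ℝ) ^ h j) * hsq

theorem neg_one_pow_mul_tmPartialSum_mem_Ioc {q k : ℕ} {h : ℕ → ℕ}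
    (hh : StrictAntiOn h (Set.Iic q)) (hr : ∑ j ∈ range (q + 1), 2 ^ h j < 2 ^ k) {x : ℝ}
    (hx : 2 ^ (k + 1) * (k : ℝ) ≤ x - 2 ^ k) :
    (-1) ^ q * tmPartialSum (∑ j ∈ range (q + 1), 2 ^ h j) x ∈
      Set.Ioc (tmBlockSum k 0 (x - 2 ^ k))
        (tmBlockSum (h q) 0 (x + ∑ j ∈ range q, 2 ^ h j)) := by
  induction q with
  | zero =>
    have hk : h 0 < k := (Nat.pow_lt_pow_iff_right one_lt_two).1 (by simpa using hr)
    have hbase := tmBlockSum_lt_tmBlockSum_add_two_pow hk hx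
    rw [sub_add_cancel] at hbase
    simpa [tmPartialSum, tmBlockSum] using hbase
  | succ q ih =>
    rw [sum_range_succ] at hr
    obtain ⟨hlow, hup⟩ := ih (hh.mono (Set.Iic_subset_Iic.2 q.le_succ))
      ((Nat.le_add_right _ _).trans_lt hr)
    have hhq : h (q + 1) < h q :=
      hh (Set.mem_Iic.2 q.le_succ) (Set.mem_Iic.2 le_rfl) q.lt_succ_self
    have hqk : h q < k := by
      rw [sum_range_succ] at hr
      exact (Nat.pow_lt_pow_iff_right one_lt_two).1
        (((Nat.le_add_left _ _).trans (Nat.le_add_right _ _)).trans_lt hr)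
    have hrk : ∑ j ∈ range (q + 1), (2 : ℝ) ^ h j ≤ 2 ^ k := by
      exact_mod_cast (Nat.le_add_right _ _).trans hr.le
    rw [sum_range_succ] at hrk
    have hstep := tmBlockSum_lt_tmBlockSum_sub hhq hqk hx
      (u := x + ∑ j ∈ range q, (2 : ℝ) ^ h j)
      (by rw [sub_add_cancel]; exact le_add_of_nonneg_right (by positivity))
      (by rw [pow_succ]; linarith)
    have hpos : 0 < tmBlockSum k 0 (x - 2 ^ k) :=
      tmBlockSum_pos k 0 ((mul_pos (by positivity) (by exact_mod_cast hqk.pos)).trans_le hx)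
    rw [Set.mem_Ioc, neg_one_pow_mul_tmPartialSum_succ hh x]
    constructor
    · rw [sum_range_succ _ q, ← add_assoc]
      linarith
    · linarith

/-- if `r = ∑_{0 ≤ j ≤ q} 2^{h_j}` with `h_0 > ⋯ > h_q ≥ 0`, `r < 2^k`,
and `x ≥ 2^{k+1}(k+1)`, then
`(-1)^q ∑_{0 ≤ ℓ < r} ε_ℓ/(x+ℓ) > g_k(x - 2^k) > g_k(x) > 0`. -/
theorem stmt_8 (q : ℕ) (h : ℕ → ℕ)
    (hdec : ∀ i j, i < j → j ≤ q → h j < h i)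
    (k : ℕ) (hr : (∑ j ∈ Finset.range (q + 1), 2 ^ h j) < 2 ^ k)
    (x : ℝ) (hx : 2 ^ (k + 1) * ((k : ℝ) + 1) ≤ x) :
    (-1 : ℝ) ^ q *
        (∑ ℓ ∈ Finset.range (∑ j ∈ Finset.range (q + 1), 2 ^ h j),
          tmSign ℓ / (x + ℓ))
      > gFun k (x - 2 ^ k) ∧
    gFun k (x - 2 ^ k) > gFun k x ∧ gFun k x > 0 := by
  have h2k : (0 : ℝ) < 2 ^ k := by positivity
  have hy : 2 ^ (k + 1) * (k : ℝ) ≤ x - 2 ^ k := by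
    rw [pow_succ] at hx ⊢
    linarith
  have hy0 : 0 < x - 2 ^ k := by
    rw [pow_succ] at hx
    nlinarith [(k.cast_nonneg : (0 : ℝ) ≤ k)]
  rw [gFun_eq_tmBlockSum]
  refine ⟨(neg_one_pow_mul_tmPartialSum_mem_Ioc (fun i _ j hj hij => hdec i j hij hj) hr hy).1,
    tmBlockSum_strictAntiOn k 0 hy0 (hy0.trans (by linarith)) (by linarith),
    tmBlockSum_pos k 0 (hy0.trans (by linarith))⟩
end

section
/- Let k ≥ 1 and let m be an integer. Then U_{k,m} = ∑_{a odd, 1 ≤ a ≤ 2^k − 1} c(a)·e^{2πi a m/2^k}·log(1 − e^{2πi a/2^k}), where c(a) := i^k · e^{πi a/2^k} · ∏_{j=1}^{k} sin(π a/2^j) and log is the principal branch of the complex logarithm. -/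
/-!
Discrete Fourier inversion on `ℤ / 2^k` writes `f_k(n)` as `∑_a F(a) e^{2πian/2^k}`, where
`2^k F(a)` is the Thue–Morse polynomial `∑_{n<2^k} ε_n z^n = ∏_{j<k} (1 - z^{2^j})` evaluated at
`z = e^{-2πia/2^k}`. Writing each factor as `1 - e^{-2iθ} = 2i e^{-iθ} sin θ` gives
`F(a) = (-1)^a c(a)`, and `c(a) = 0` for even `a` because of the factor `sin(πa/2)`. Hence
`∑_{n ≤ N} f_k(n+m)/n = -∑_{a odd} c(a) e^{2πiam/2^k} ∑_{n ≤ N} z_a^n/n` with `z_a = e^{2πia/2^k}`,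
and for `|z| = 1`, `z ≠ 1` the series `∑ z^n/n` converges by Dirichlet's test, to `-log(1 - z)` by
Abel's limit theorem.
-/

open Filter Complex

/-- `fPerInt k` is the `2^k`-periodic function on `ℤ` with `fPerInt k n = ε_n`
for `0 ≤ n < 2^k`. -/
noncomputable def fPerInt (k : ℕ) (n : ℤ) : ℝ := tmSign (n % (2 ^ k : ℤ)).toNat

/-- `U_{k,m} = ∑_{n=1}^∞ f_k(n+m)/n` (limit of partial sums). -/
noncomputable def Uconst (k : ℕ) (m : ℤ) : ℝ :=
  limUnder atTop (fun N : ℕ => ∑ n ∈ Finset.Icc 1 N, fPerInt k ((n : ℤ) + m) / (n : ℝ))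

open Finset Topology
open scoped Real

theorem Finset.sum_range_two_mul {M : Type*} [AddCommMonoid M] (g : ℕ → M) (m : ℕ) :
    ∑ n ∈ range (2 * m), g n = ∑ i ∈ range m, (g (2 * i) + g (2 * i + 1)) := by
  induction m with
  | zero => simp
  | succ m ih =>
    rw [mul_add, mul_one, sum_range_succ, sum_range_succ, ih, sum_range_succ, add_assoc]

theorem IsPrimitiveRoot.sum_zpow_mul_eq_ite {K : Type*} [Field K] {ζ : K} {N : ℕ}
    (hζ : IsPrimitiveRoot ζ N) (r : ℤ) :
    ∑ a ∈ range N, ζ ^ ((a : ℤ) * r) = if (N : ℤ) ∣ r then (N : K) else 0 := by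
  simp_rw [mul_comm _ r, zpow_mul, zpow_natCast]
  split_ifs with hr
  · simp [(hζ.zpow_eq_one_iff_dvd r).mpr hr]
  · have hr1 : ζ ^ r ≠ 1 := (hζ.zpow_eq_one_iff_dvd r).not.mpr hr
    rw [geom_sum_eq hr1, ← zpow_natCast, ← zpow_mul, mul_comm, zpow_mul, hζ.zpow_eq_one,
      one_zpow, sub_self, zero_div]

theorem IsPrimitiveRoot.sum_dft_mul_zpow {K : Type*} [Field K] {ζ : K} {N : ℕ}
    (hζ : IsPrimitiveRoot ζ N) {f : ℤ → K} (hf : Function.Periodic f N) (n : ℤ) :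
    ∑ a ∈ range N, (∑ p ∈ range N, f p * ζ ^ (-((a : ℤ) * p))) * ζ ^ ((a : ℤ) * n)
      = N * f n := by
  rcases N.eq_zero_or_pos with rfl | hN
  · simp
  have hζ0 : ζ ≠ 0 := hζ.ne_zero hN.ne'
  have hN' : (0 : ℤ) < N := by exact_mod_cast hN
  set p₀ := (n % (N : ℤ)).toNat
  have hp₀ : (p₀ : ℤ) = n % N := Int.toNat_of_nonneg (Int.emod_nonneg _ hN'.ne')
  have hp₀N : (p₀ : ℤ) < N := hp₀ ▸ Int.emod_lt_of_pos n hN'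
  calc _ = ∑ p ∈ range N, f p * ∑ a ∈ range N, ζ ^ ((a : ℤ) * (n - p)) := by
        simp_rw [sum_mul, mul_sum, mul_assoc, ← zpow_add₀ hζ0]
        rw [sum_comm]
        refine sum_congr rfl fun p _ => sum_congr rfl fun a _ => ?_
        ring_nf
    _ = ∑ p ∈ range N, f p * if (N : ℤ) ∣ n - p then (N : K) else 0 := by
        simp_rw [hζ.sum_zpow_mul_eq_ite]
    _ = f p₀ * N := by
        refine (sum_eq_single_of_mem p₀ (mem_range.mpr (by omega)) fun p hp hne => ?_).trans ?_
        · rw [if_neg, mul_zero]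
          intro hdvd
          have hpN : (p : ℤ) % N = p := Int.emod_eq_of_lt (by positivity)
            (by exact_mod_cast mem_range.mp hp)
          have := (Int.modEq_iff_dvd.mpr hdvd : (p : ℤ) ≡ n [ZMOD N])
          rw [Int.ModEq, hpN, ← hp₀] at this
          omega
        · rw [if_pos ⟨n / N, by rw [hp₀, Int.emod_def]; ring⟩]
    _ = N * f n := by
        rw [mul_comm, hp₀, Int.emod_def, mul_comm (N : ℤ)]
        exact congrArg _ (hf.sub_int_mul_eq (n / N))

theorem Complex.one_sub_exp_neg_two_mul_I (w : ℂ) :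
    1 - exp (-(2 * w * I)) = 2 * I * exp (-(w * I)) * sin w := by
  have hprod : exp (-(w * I)) * exp (w * I) = 1 := by rw [← exp_add]; simp
  have hsq : exp (-(2 * w * I)) = exp (-(w * I)) * exp (-(w * I)) := by rw [← exp_add]; ring_nf
  rw [sin, hsq, neg_mul]
  linear_combination (-(exp (-(w * I)) * (exp (-(w * I)) - exp (w * I)))) * I_sq - hprod

theorem Complex.prod_one_sub_exp_pow_two_pow (θ : ℂ) (k : ℕ) :
    ∏ j ∈ range k, (1 - exp (-(2 * θ * I)) ^ 2 ^ j)
      = (2 * I) ^ k * exp (-((2 ^ k - 1) * θ * I)) * ∏ j ∈ range k, sin (2 ^ j * θ) := by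
  induction k with
  | zero => simp
  | succ k ih =>
    have hlast : exp (-(2 * θ * I)) ^ 2 ^ k = exp (-(2 * (2 ^ k * θ) * I)) := by
      rw [← exp_nat_mul]; push_cast; ring_nf
    rw [prod_range_succ, ih, hlast, one_sub_exp_neg_two_mul_I, prod_range_succ]
    have hexp : exp (-((2 ^ k - 1) * θ * I)) * exp (-(2 ^ k * θ * I))
        = exp (-((2 ^ (k + 1) - 1) * θ * I)) := by rw [← exp_add]; ring_nf
    rw [← hexp]
    ring

theorem Complex.prod_range_sin_two_pow_mul_div (x : ℂ) (k : ℕ) :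
    ∏ j ∈ range k, sin (2 ^ j * (x / 2 ^ k)) = ∏ j ∈ Icc 1 k, sin (x / 2 ^ j) := by
  induction k with
  | zero => simp
  | succ k ih =>
    rw [prod_range_succ', prod_Icc_succ_top (by omega), ← ih]
    congr 1
    · refine prod_congr rfl fun j _ => ?_
      rw [pow_succ, pow_succ]
      field_simp
    · simp

theorem Complex.isPrimitiveRoot_exp_odd_div_two_pow (k : ℕ) {a : ℕ} (ha : Odd a) :
    IsPrimitiveRoot (exp (2 * π * I * a / 2 ^ k)) (2 ^ k) := by
  convert isPrimitiveRoot_exp_of_coprime a (2 ^ k) (by positivity)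
    ((Nat.coprime_two_right.mpr ha).pow_right k) using 2
  push_cast
  ring

theorem Complex.cauchySeq_sum_range_pow_div {z : ℂ} (hz : ‖z‖ = 1) (hz1 : z ≠ 1) :
    CauchySeq fun N => ∑ n ∈ range N, z ^ n / n := by
  rw [← cauchySeq_shift 1]
  have hshift (N : ℕ) : ∑ n ∈ range (N + 1), z ^ n / n
      = ∑ i ∈ range N, ((i : ℝ) + 1)⁻¹ • z ^ (i + 1) := by
    rw [sum_range_succ']
    simp [div_eq_inv_mul]
  simp_rw [hshift]
  refine Antitone.cauchySeq_series_mul_of_tendsto_zero_of_bounded (b := 2 / ‖z - 1‖)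
    (fun i j hij => inv_anti₀ (by positivity) (by simpa using hij))
    (by simpa [one_div] using tendsto_one_div_add_atTop_nhds_zero_nat (𝕜 := ℝ)) fun n => ?_
  have hgeom : ∑ i ∈ range n, z ^ (i + 1) = z * ((z ^ n - 1) / (z - 1)) := by
    rw [← geom_sum_eq hz1, mul_sum]
    simp_rw [pow_succ']
  rw [hgeom, norm_mul, norm_div, hz, one_mul]
  gcongr
  calc ‖z ^ n - 1‖ ≤ ‖z ^ n‖ + ‖(1 : ℂ)‖ := norm_sub_le _ _
    _ = 2 := by rw [norm_pow, hz, one_pow, norm_one]; norm_num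

theorem Complex.tendsto_sum_range_pow_div {z : ℂ} (hz : ‖z‖ = 1) (hz1 : z ≠ 1) :
    Tendsto (fun N => ∑ n ∈ range N, z ^ n / n) atTop (𝓝 (-log (1 - z))) := by
  obtain ⟨l, hl⟩ := cauchySeq_tendsto_of_complete (cauchySeq_sum_range_pow_div hz hz1)
  convert hl
  -- Abel's limit theorem: `l` is also the limit of `∑ (x z)ⁿ / n = -log (1 - x z)` as `x → 1⁻`.
  have hre : 0 < (1 - z).re := by
    have := norm_sub_one_sq_eq_of_norm_eq_one hz
    have : 0 < ‖z - 1‖ := norm_pos_iff.mpr (sub_ne_zero.mpr hz1)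
    simp only [sub_re, one_re]
    nlinarith
  have hlog : Tendsto (fun x : ℝ => -log (1 - x * z)) (𝓝[<] 1) (𝓝 (-log (1 - z))) := by
    have hcont : ContinuousAt (fun x : ℝ => -log (1 - x * z)) 1 := by
      refine ((continuousAt_clog ?_).comp ?_).neg
      · simpa using mem_slitPlane_iff.mpr (Or.inl hre)
      · fun_prop
    simpa using hcont.tendsto.mono_left nhdsWithin_le_nhds
  have habel := tendsto_map'_iff.mp (tendsto_tsum_powerSeries_nhdsWithin_lt hl)
  refine tendsto_nhds_unique hlog (habel.congr' ?_)
  filter_upwards [Ioo_mem_nhdsLT (show (-1 : ℝ) < 1 by norm_num)] with x hx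
  have hxz : ‖(x : ℂ) * z‖ < 1 := by
    rw [norm_mul, norm_real, hz, mul_one, Real.norm_eq_abs, abs_lt]
    exact hx
  simp_rw [Function.comp_apply, ← (hasSum_taylorSeries_neg_log hxz).tsum_eq, mul_pow]
  exact tsum_congr fun n => by ring

theorem Complex.tendsto_sum_Icc_pow_div {z : ℂ} (hz : ‖z‖ = 1) (hz1 : z ≠ 1) :
    Tendsto (fun N : ℕ => ∑ n ∈ Icc 1 N, z ^ n / n) atTop (𝓝 (-log (1 - z))) := by
  refine ((tendsto_add_atTop_iff_nat 1).mpr (tendsto_sum_range_pow_div hz hz1)).congr fun N => ?_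
  rw [range_eq_Ico, sum_eq_sum_Ico_succ_bot (Nat.succ_pos N), Nat.cast_zero, div_zero, zero_add,
    zero_add, Nat.succ_eq_add_one, Ico_add_one_right_eq_Icc]

theorem Complex.ofReal_limUnder_eq {u : ℕ → ℝ} {L : ℂ}
    (h : Tendsto (fun N => (u N : ℂ)) atTop (𝓝 L)) : ((limUnder atTop u : ℝ) : ℂ) = L := by
  have hre : Tendsto u atTop (𝓝 L.re) := by
    simpa [Function.comp_def] using (continuous_re.tendsto L).comp h
  rw [hre.limUnder_eq]
  exact tendsto_nhds_unique ((continuous_ofReal.tendsto _).comp hre) h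

theorem tmSign_two_mul (n : ℕ) : tmSign (2 * n) = tmSign n := by
  rcases n.eq_zero_or_pos with rfl | hn
  · rfl
  · rw [tmSign, Nat.digits_def' (by norm_num) (by omega)]
    simp [tmSign]

theorem tmSign_two_mul_add_one (n : ℕ) : tmSign (2 * n + 1) = -tmSign n := by
  have hmod : (2 * n + 1) % 2 = 1 := by omega
  have hdiv : (2 * n + 1) / 2 = n := by omega
  rw [tmSign, Nat.digits_def' (by norm_num) (by omega), hmod, hdiv]
  simp [tmSign, pow_add]

theorem sum_range_tmSign_mul_pow (k : ℕ) (z : ℂ) :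
    ∑ n ∈ range (2 ^ k), (tmSign n : ℂ) * z ^ n = ∏ j ∈ range k, (1 - z ^ 2 ^ j) := by
  induction k generalizing z with
  | zero => simp [tmSign]
  | succ k ih =>
    have hpair (i : ℕ) :
        (tmSign (2 * i) : ℂ) * z ^ (2 * i) + (tmSign (2 * i + 1) : ℂ) * z ^ (2 * i + 1)
          = (1 - z) * ((tmSign i : ℂ) * (z ^ 2) ^ i) := by
      rw [tmSign_two_mul, tmSign_two_mul_add_one, pow_mul]
      push_cast
      ring
    rw [pow_succ', sum_range_two_mul, sum_congr rfl fun i _ => hpair i, ← mul_sum, ih,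
      prod_range_succ', pow_zero, pow_one, mul_comm]
    simp_rw [← pow_mul, pow_succ']

theorem fPerInt_natCast_of_lt {k p : ℕ} (hp : p < 2 ^ k) : fPerInt k p = tmSign p := by
  rw [fPerInt, Int.emod_eq_of_lt (by positivity) (by exact_mod_cast hp), Int.toNat_natCast]

theorem fPerInt_periodic (k : ℕ) : Function.Periodic (fPerInt k) (2 ^ k : ℕ) := fun n => by
  simp [fPerInt]

noncomputable def tmCoeff (k a : ℕ) : ℂ :=
  I ^ k * exp (π * I * a / 2 ^ k) * ∏ j ∈ Icc 1 k, sin (π * a / 2 ^ j)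

theorem tmCoeff_of_even {k a : ℕ} (hk : 1 ≤ k) (ha : Even a) : tmCoeff k a = 0 := by
  obtain ⟨b, rfl⟩ := ha
  refine mul_eq_zero_of_right _ (prod_eq_zero (mem_Icc.mpr ⟨le_rfl, hk⟩) ?_)
  rw [← sin_nat_mul_pi b]
  push_cast
  ring_nf

theorem sum_range_tmSign_mul_zpow_exp (k a : ℕ) :
    ∑ p ∈ range (2 ^ k), (tmSign p : ℂ) * exp (2 * π * I / (2 ^ k : ℕ)) ^ (-((a : ℤ) * p))
      = 2 ^ k * (-1) ^ a * tmCoeff k a := by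
  have hpow (p : ℕ) : exp (2 * π * I / (2 ^ k : ℕ)) ^ (-((a : ℤ) * p))
      = exp (-(2 * (π * a / 2 ^ k) * I)) ^ p := by
    rw [← exp_int_mul, ← exp_nat_mul]
    push_cast
    ring_nf
  have hexp : exp (-((2 ^ k - 1) * (π * a / 2 ^ k) * I)) = (-1) ^ a * exp (π * I * a / 2 ^ k) := by
    rw [← exp_neg_pi_mul_I, ← exp_nat_mul, ← exp_add]
    congr 1
    field_simp
    ring
  simp_rw [hpow, sum_range_tmSign_mul_pow, prod_one_sub_exp_pow_two_pow, hexp,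
    prod_range_sin_two_pow_mul_div, tmCoeff]
  ring

theorem fPerInt_eq_sum_odd {k : ℕ} (hk : 1 ≤ k) (n : ℤ) :
    (fPerInt k n : ℂ)
      = ∑ a ∈ (range (2 ^ k)).filter Odd, -tmCoeff k a * exp (2 * π * I * a * n / 2 ^ k) := by
  set ζ : ℂ := exp (2 * π * I / (2 ^ k : ℕ))
  have hζ : IsPrimitiveRoot ζ (2 ^ k) := isPrimitiveRoot_exp _ (by positivity)
  have hinv := hζ.sum_dft_mul_zpow (f := fun n => (fPerInt k n : ℂ))
    (fun n => congrArg _ (fPerInt_periodic k n)) n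
  have hcoeff (a : ℕ) : ∑ p ∈ range (2 ^ k), (fPerInt k p : ℂ) * ζ ^ (-((a : ℤ) * p))
      = 2 ^ k * (-1) ^ a * tmCoeff k a := by
    rw [← sum_range_tmSign_mul_zpow_exp]
    refine sum_congr rfl fun p hp => ?_
    rw [fPerInt_natCast_of_lt (mem_range.mp hp)]
  have hζpow (a : ℕ) : ζ ^ ((a : ℤ) * n) = exp (2 * π * I * a * n / 2 ^ k) := by
    rw [← exp_int_mul]
    push_cast
    ring_nf
  simp_rw [hcoeff, hζpow] at hinv
  apply mul_left_cancel₀ (pow_ne_zero k (two_ne_zero : (2 : ℂ) ≠ 0))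
  rw [sum_filter, mul_sum]
  push_cast at hinv
  rw [← hinv]
  refine sum_congr rfl fun a _ => ?_
  split_ifs with ha
  · rw [ha.neg_one_pow]
    ring
  · rw [tmCoeff_of_even hk (Nat.not_odd_iff_even.mp ha)]
    ring

/-- Proposition 3 of the paper: for `k ≥ 1` and `m ∈ ℤ`,
`U_{k,m} = ∑_{a odd, 1 ≤ a ≤ 2^k-1} c(a) e^{2πiam/2^k} log(1 - e^{2πia/2^k})`, with
`c(a) = i^k e^{πia/2^k} ∏_{j=1}^k sin(πa/2^j)` and `log` the principal branch. -/
theorem stmt_15 (k : ℕ) (hk : 1 ≤ k) (m : ℤ) :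
    (Uconst k m : ℂ)
      = ∑ a ∈ (Finset.range (2 ^ k)).filter (fun a => Odd a),
          (I ^ k * Complex.exp ((Real.pi : ℂ) * I * (a : ℂ) / 2 ^ k) *
              ∏ j ∈ Finset.Icc 1 k, Complex.sin ((Real.pi : ℂ) * (a : ℂ) / 2 ^ j)) *
            Complex.exp (2 * (Real.pi : ℂ) * I * (a : ℂ) * (m : ℂ) / 2 ^ k) *
            Complex.log (1 - Complex.exp (2 * (Real.pi : ℂ) * I * (a : ℂ) / 2 ^ k)) := by
  set z : ℕ → ℂ := fun a => exp (2 * π * I * a / 2 ^ k)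
  have hpartial (N : ℕ) : ((∑ n ∈ Icc 1 N, fPerInt k (n + m) / n : ℝ) : ℂ)
      = ∑ a ∈ (range (2 ^ k)).filter Odd,
          -tmCoeff k a * exp (2 * π * I * a * m / 2 ^ k) * ∑ n ∈ Icc 1 N, z a ^ n / n := by
    push_cast
    simp_rw [fPerInt_eq_sum_odd hk, sum_div, mul_sum]
    rw [sum_comm]
    refine sum_congr rfl fun a _ => sum_congr rfl fun n _ => ?_
    rw [← exp_nat_mul, mul_assoc (-_), ← mul_div_assoc, ← exp_add]
    push_cast
    ring_nf
  have hseries (a : ℕ) (ha : a ∈ (range (2 ^ k)).filter Odd) :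
      Tendsto (fun N : ℕ => ∑ n ∈ Icc 1 N, z a ^ n / n) atTop (𝓝 (-log (1 - z a))) := by
    have hprim := isPrimitiveRoot_exp_odd_div_two_pow k (mem_filter.mp ha).2
    exact tendsto_sum_Icc_pow_div (hprim.norm'_eq_one (by positivity))
      (hprim.ne_one (Nat.one_lt_two_pow (by omega)))
  rw [Uconst, ofReal_limUnder_eq ((tendsto_finsetSum _ fun a ha =>
    (hseries a ha).const_mul _).congr fun N => (hpartial N).symm)]
  refine sum_congr rfl fun a _ => ?_
  simp only [tmCoeff, z]
  ring
end
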